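/- arXiv:2209.12996 — 2 statements merged into one kernel-verified Lean document; each statement's English description precedes it below -/
import Mathlib

section
/- Let Γ be the graph product of a family of infinite groups {Γ_v} over a finite simple graph 𝒢, let 𝒮 ⊆ 𝒱 be a vertex subset, and let g ∈ Γ. If the subgroup Γ_𝒮 ∩ g Γ_𝒮 g⁻¹ has finite index in Γ_𝒮 (i.e., g quasi-normalizes in the one-sided sense), then g ∈ Γ_{𝒮 ∪ lk(𝒮)}. Consequently, the quasi-normalizer QN_Γ(Γ_𝒮) = {g ∈ Γ : [Γ_𝒮 : Γ_𝒮 ∩ g Γ_𝒮 g⁻¹] < ∞ and [Γ_𝒮 : Γ_𝒮 ∩ g⁻¹ Γ_𝒮 g] < ∞} is contained in Γ_{𝒮 ∪ lk(𝒮)}. -/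
open Monoid

variable {V : Type*}

/-- Defining relators of a graph product: commutators of elements of adjacent vertex groups. -/
def graphProdRels (G : SimpleGraph V) (Γ : V → Type*) [∀ v, Group (Γ v)] :
    Set (Monoid.CoprodI Γ) :=
  {x | ∃ (u w : V) (a : Γ u) (b : Γ w), G.Adj u w ∧
      x = CoprodI.of a * CoprodI.of b * (CoprodI.of a)⁻¹ * (CoprodI.of b)⁻¹}

/-- The graph product of the family of groups `Γ` over the simple graph `G`. -/
def GraphProduct (G : SimpleGraph V) (Γ : V → Type*) [∀ v, Group (Γ v)] : Type _ :=
  CoprodI Γ ⧸ Subgroup.normalClosure (graphProdRels G Γ)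

instance (G : SimpleGraph V) (Γ : V → Type*) [∀ v, Group (Γ v)] :
    Group (GraphProduct G Γ) :=
  inferInstanceAs (Group (CoprodI Γ ⧸ Subgroup.normalClosure (graphProdRels G Γ)))

/-- The canonical map from a vertex group into the graph product. -/
def GraphProduct.of {G : SimpleGraph V} {Γ : V → Type*} [∀ v, Group (Γ v)] (v : V) :
    Γ v →* GraphProduct G Γ :=
  (QuotientGroup.mk' (Subgroup.normalClosure (graphProdRels G Γ))).comp CoprodI.of

/-- The full subgroup of a graph product associated with a set of vertices. -/
def GraphProduct.full (G : SimpleGraph V) (Γ : V → Type*) [∀ v, Group (Γ v)]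
    (U : Set V) : Subgroup (GraphProduct G Γ) :=
  Subgroup.closure (⋃ u ∈ U, Set.range (GraphProduct.of (G := G) (Γ := Γ) u))

/-- The conjugate subgroup `g H g⁻¹`. -/
def conjSub {G : Type*} [Group G] (g : G) (H : Subgroup G) : Subgroup G :=
  Subgroup.map (MulAut.conj g).toMonoidHom H

/-- The common link of a set of vertices. -/
def lkSet (G : SimpleGraph V) (S : Set V) : Set V :=
  ⋂ u ∈ S, G.neighborSet u

/-!
Reduced words (no trivial letter, no two letters at one vertex that can be shuffled next to each
other) represent every element, and two reduced words for the same element differ only by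
shuffling adjacent commuting letters; this uniqueness comes from letting the graph product act on
reduced words modulo shuffling.

Take a shortest word `w` for an element of the double coset `Γ_S g Γ_S`; no letter at a vertex of
`S` can be shuffled to either end of `w`. For `s ∈ S`, finite index of `Γ_S ∩ g Γ_S g⁻¹` and
infiniteness of `Γ_s` give `z ≠ 1` in `Γ_s` with `w⁻¹ z w ∈ Γ_S`. Now `z · w` and `w · u`, with
`u` a reduced word for `w⁻¹ z w`, are reduced words for the same element, so they are shuffles of
each other. Counting letters gives `u = z`, and moving `z` across `w` forces every letter of `w`
to be adjacent to `s`. Thus `w ∈ Γ_{lk S}` and `g ∈ Γ_S Γ_{lk S} Γ_S ⊆ Γ_{S ∪ lk S}`.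
-/

/-- Pigeonhole: an infinite family `φ(H) ≤ F` cannot inject into the finite set `F ⧸ (F ∩ gFg⁻¹)`,
and two elements with the same image differ by an element conjugated into `F`. -/
theorem exists_ne_one_conj_mem_of_finiteIndex {G H : Type*} [Group G] [Group H] [Infinite H]
    {F : Subgroup G} {g m : G} (hg : ((conjSub g F).subgroupOf F).FiniteIndex)
    (hm : m ∈ DoubleCoset.doubleCoset g F F) (φ : H →* G) (hφ : φ.range ≤ F) :
    ∃ x ≠ 1, m⁻¹ * φ x * m ∈ F := by
  obtain ⟨a, ha, b, hb, rfl⟩ := DoubleCoset.mem_doubleCoset.1 hm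
  have hmem : ∀ x, a⁻¹ * φ x * a ∈ F := fun x =>
    F.mul_mem (F.mul_mem (F.inv_mem ha) (hφ ⟨x, rfl⟩)) ha
  obtain ⟨x, y, hxy, hxy'⟩ := Finite.exists_ne_map_eq_of_infinite
    fun x => (QuotientGroup.mk ⟨_, hmem x⟩ : F ⧸ (conjSub g F).subgroupOf F)
  refine ⟨x⁻¹ * y, fun h => hxy (inv_mul_eq_one.1 h), ?_⟩
  rw [QuotientGroup.eq, Subgroup.mem_subgroupOf] at hxy'
  obtain ⟨c, hc, hgc⟩ := Subgroup.mem_map.1 hxy'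
  have hc' : a⁻¹ * φ (x⁻¹ * y) * a = g * c * g⁻¹ := by
    rw [map_mul, map_inv]
    simpa [mul_assoc] using hgc.symm
  have : (a * g * b)⁻¹ * φ (x⁻¹ * y) * (a * g * b) = b⁻¹ * c * b := by
    rw [show φ (x⁻¹ * y) = a * (g * c * g⁻¹) * a⁻¹ by rw [← hc']; group]; group
  rw [this]
  exact F.mul_mem (F.mul_mem (F.inv_mem hb) hc) hb

namespace GraphProduct

variable {Γ : V → Type*} {G : SimpleGraph V}

inductive Shuffle (G : SimpleGraph V) : List (Σ v, Γ v) → List (Σ v, Γ v) → Prop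
  | swap (p s : List (Σ v, Γ v)) (x y : Σ v, Γ v) (h : G.Adj x.1 y.1) :
      Shuffle G (p ++ x :: y :: s) (p ++ y :: x :: s)
  | refl (w) : Shuffle G w w
  | symm {w w'} : Shuffle G w w' → Shuffle G w' w
  | trans {w₁ w₂ w₃} : Shuffle G w₁ w₂ → Shuffle G w₂ w₃ → Shuffle G w₁ w₃

namespace Shuffle

theorem swap_cons {x y : Σ v, Γ v} (h : G.Adj x.1 y.1) (s : List (Σ v, Γ v)) :
    Shuffle G (x :: y :: s) (y :: x :: s) :=
  swap [] s x y h

theorem cons (l : Σ v, Γ v) {w w' : List (Σ v, Γ v)} (h : Shuffle G w w') :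
    Shuffle G (l :: w) (l :: w') := by
  induction h with
  | swap p s x y hxy => exact swap (l :: p) s x y hxy
  | refl w => exact refl _
  | symm _ ih => exact ih.symm
  | trans _ _ ih₁ ih₂ => exact ih₁.trans ih₂

theorem perm {w w' : List (Σ v, Γ v)} (h : Shuffle G w w') : w.Perm w' := by
  induction h with
  | swap p s x y _ => exact (List.Perm.swap y x s).append_left p
  | refl w => exact .refl _
  | symm _ ih => exact ih.symm
  | trans _ _ ih₁ ih₂ => exact ih₁.trans ih₂

theorem filter_eq {w w' : List (Σ v, Γ v)} (h : Shuffle G w w') (p : (Σ v, Γ v) → Bool)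
    (hp : ∀ x y, p x → p y → ¬ G.Adj x.1 y.1) : w.filter p = w'.filter p := by
  induction h with
  | swap q s x y hxy =>
    have : ¬ (p x ∧ p y) := fun ⟨hx, hy⟩ => hp x y hx hy hxy
    by_cases hx : p x <;> by_cases hy : p y <;> simp_all [List.filter_append]
  | refl w => rfl
  | symm _ ih => exact ih.symm
  | trans _ _ ih₁ ih₂ => exact ih₁.trans ih₂

end Shuffle

def CannotStartAt (G : SimpleGraph V) (v : V) : List (Σ v, Γ v) → Prop
  | [] => True
  | l :: w => l.1 ≠ v ∧ (G.Adj l.1 v → CannotStartAt G v w)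

theorem cannotStartAt_cons {v : V} {l : Σ v, Γ v} {w : List (Σ v, Γ v)} :
    CannotStartAt G v (l :: w) ↔ l.1 ≠ v ∧ (G.Adj l.1 v → CannotStartAt G v w) := Iff.rfl

theorem cannotStartAt_append {v : V} {w u : List (Σ v, Γ v)} :
    CannotStartAt G v (w ++ u) ↔
      CannotStartAt G v w ∧ ((∀ l ∈ w, G.Adj l.1 v) → CannotStartAt G v u) := by
  induction w with
  | nil => simp [CannotStartAt]
  | cons l w ih =>
    simp only [List.cons_append, cannotStartAt_cons, ih, List.mem_cons, forall_eq_or_imp]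
    tauto

theorem cannotStartAt_of_forall_ne {v : V} {w : List (Σ v, Γ v)} (h : ∀ l ∈ w, l.1 ≠ v) :
    CannotStartAt G v w := by
  induction w with
  | nil => trivial
  | cons l w ih => exact ⟨h l (by simp), fun _ => ih fun l' hl' => h l' (by simp [hl'])⟩

theorem CannotStartAt.forall_ne {v : V} {w : List (Σ v, Γ v)} (h : CannotStartAt G v w)
    (hadj : ∀ l ∈ w, l.1 ≠ v → G.Adj l.1 v) : ∀ l ∈ w, l.1 ≠ v := by
  induction w with
  | nil => simp
  | cons l w ih =>
    obtain ⟨hl, hw⟩ := h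
    simp only [List.mem_cons, forall_eq_or_imp] at hadj ⊢
    exact ⟨hl, ih (hw (hadj.1 hl)) hadj.2⟩

theorem exists_eq_append_of_not_cannotStartAt {v : V} {w : List (Σ v, Γ v)}
    (h : ¬ CannotStartAt G v w) :
    ∃ (α : List (Σ v, Γ v)) (x : Γ v) (β : List (Σ v, Γ v)),
      w = α ++ ⟨v, x⟩ :: β ∧ ∀ l ∈ α, G.Adj l.1 v := by
  induction w with
  | nil => exact absurd trivial h
  | cons l w ih =>
    obtain ⟨u, x⟩ := l
    by_cases hu : u = v
    · subst hu
      exact ⟨[], x, w, rfl, by simp⟩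
    · obtain ⟨hadj, hw⟩ : G.Adj u v ∧ ¬ CannotStartAt G v w := by
        simpa [cannotStartAt_cons, hu] using h
      obtain ⟨α, y, β, rfl, hα⟩ := ih hw
      exact ⟨⟨u, x⟩ :: α, y, β, rfl, by simpa [hadj] using hα⟩

theorem forall_adj_of_shuffle_cons_append {x : Σ v, Γ v} {w : List (Σ v, Γ v)}
    (hsh : Shuffle G (x :: w) (w ++ [x])) (hw : CannotStartAt G x.1 w) :
    ∀ l ∈ w, G.Adj x.1 l.1 := by
  classical
  have hne : ∀ l ∈ w, l.1 ≠ x.1 → G.Adj x.1 l.1 := by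
    intro l hl hlx
    by_contra hna
    have hp : ∀ y z : Σ v, Γ v, (y.1 = x.1 ∨ y.1 = l.1) → (z.1 = x.1 ∨ z.1 = l.1) →
        ¬ G.Adj y.1 z.1 := by
      rintro y z (hy | hy) (hz | hz) <;> rw [hy, hz] <;> simp_all [G.adj_comm]
    -- Letters at `x.1` and `l.1` never pass each other, so the shuffle becomes
    -- `x :: f = f ++ [x]` on them, which makes `f` constant.
    set f := w.filter fun y => decide (y.1 = x.1 ∨ y.1 = l.1)
    have hfilter := hsh.filter_eq (fun y => decide (y.1 = x.1 ∨ y.1 = l.1)) (by simpa using hp)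
    rw [List.filter_cons_of_pos (by simp), List.filter_append,
      List.filter_cons_of_pos (by simp), List.filter_nil] at hfilter
    have hrot : (x :: f).rotate 1 = x :: f := by
      rw [List.rotate_cons_succ, List.rotate_zero]; exact hfilter.symm
    have : Nonempty (Σ v, Γ v) := ⟨x⟩
    obtain ⟨a, ha⟩ := List.rotate_one_eq_self_iff_eq_replicate.1 hrot
    have hl' : l ∈ x :: f := List.mem_cons_of_mem _ (List.mem_filter.2 ⟨hl, by simp⟩)
    rw [ha] at hl'
    exact hlx (by rw [List.eq_of_mem_replicate hl', ← List.eq_of_mem_replicate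
      (ha ▸ List.mem_cons_self : x ∈ List.replicate _ a)])
  have hvert := hw.forall_ne fun l hl hlx => (hne l hl hlx).symm
  exact fun l hl => hne l hl (hvert l hl)

variable [∀ v, Group (Γ v)]

def IsReduced (G : SimpleGraph V) : List (Σ v, Γ v) → Prop
  | [] => True
  | x :: w => x.2 ≠ 1 ∧ CannotStartAt G x.1 w ∧ IsReduced G w

open scoped Classical in
noncomputable def consLetter {v : V} (c : Γ v) (w : List (Σ v, Γ v)) : List (Σ v, Γ v) :=
  if c = 1 then w else ⟨v, c⟩ :: w

open scoped Classical in
noncomputable def lmul (G : SimpleGraph V) {v : V} (a : Γ v) : List (Σ v, Γ v) → List (Σ v, Γ v)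
  | [] => consLetter a []
  | ⟨u, x⟩ :: w =>
    if h : u = v then consLetter (a * h ▸ x) w
    else if G.Adj u v then ⟨u, x⟩ :: lmul G a w
    else consLetter a (⟨u, x⟩ :: w)

noncomputable def reduce (G : SimpleGraph V) : List (Σ v, Γ v) → List (Σ v, Γ v)
  | [] => []
  | l :: w => lmul G l.2 (reduce G w)

section ConsLetter

variable {v : V} {c : Γ v} {w w' : List (Σ v, Γ v)}

@[simp] theorem consLetter_one : consLetter (1 : Γ v) w = w := if_pos rfl

theorem consLetter_of_ne_one (hc : c ≠ 1) : consLetter c w = ⟨v, c⟩ :: w := if_neg hc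

theorem Shuffle.consLetter (c : Γ v) (h : Shuffle G w w') :
    Shuffle G (consLetter c w) (consLetter c w') := by
  unfold GraphProduct.consLetter
  split_ifs
  exacts [h, h.cons _]

theorem consLetter_cons_shuffle {l : Σ v, Γ v} (h : G.Adj l.1 v) :
    Shuffle G (consLetter c (l :: w)) (l :: consLetter c w) := by
  unfold consLetter
  split_ifs
  exacts [.refl _, .swap_cons h.symm w]

theorem consLetter_consLetter_shuffle {u : V} (huv : G.Adj u v) (a : Γ u) (b : Γ v) :
    Shuffle G (consLetter a (consLetter b w)) (consLetter b (consLetter a w)) := by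
  by_cases hb : b = 1
  · simp [hb]; exact .refl _
  · rw [consLetter_of_ne_one hb, consLetter_of_ne_one hb]
    exact consLetter_cons_shuffle huv.symm

theorem length_consLetter_le : (consLetter c w).length ≤ w.length + 1 := by
  unfold consLetter; split_ifs <;> simp

theorem mem_consLetter {l : Σ v, Γ v} (hl : l ∈ consLetter c w) : l = ⟨v, c⟩ ∨ l ∈ w := by
  unfold consLetter at hl; split_ifs at hl <;> simp_all

theorem cannotStartAt_consLetter {t : V} (htv : G.Adj t v) (h : CannotStartAt G t w) :
    CannotStartAt G t (consLetter c w) := by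
  unfold consLetter; split_ifs
  exacts [h, ⟨(G.ne_of_adj htv).symm, fun _ => h⟩]

theorem isReduced_consLetter (hw : IsReduced G w) (hv : CannotStartAt G v w) :
    IsReduced G (consLetter c w) := by
  unfold consLetter; split_ifs with hc
  exacts [hw, ⟨hc, hv, hw⟩]

end ConsLetter

section LMul

variable {v : V} {a : Γ v} {w : List (Σ v, Γ v)}

theorem lmul_nil : lmul G a [] = consLetter a [] := rfl

theorem lmul_cons_self (x : Γ v) (w : List (Σ v, Γ v)) :
    lmul G a (⟨v, x⟩ :: w) = consLetter (a * x) w := by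
  simp [lmul]

theorem lmul_cons_of_adj {l : Σ v, Γ v} (h : G.Adj l.1 v) (w : List (Σ v, Γ v)) :
    lmul G a (l :: w) = l :: lmul G a w := by
  obtain ⟨u, x⟩ := l
  simp [lmul, G.ne_of_adj h, show G.Adj u v from h]

theorem lmul_cons_of_not_adj {l : Σ v, Γ v} (hne : l.1 ≠ v) (h : ¬ G.Adj l.1 v)
    (w : List (Σ v, Γ v)) : lmul G a (l :: w) = consLetter a (l :: w) := by
  obtain ⟨u, x⟩ := l
  simp [lmul, show u ≠ v from hne, show ¬ G.Adj u v from h]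

theorem lmul_shuffle_consLetter (hw : CannotStartAt G v w) :
    Shuffle G (lmul G a w) (consLetter a w) := by
  induction w with
  | nil => exact .refl _
  | cons l w ih =>
    obtain ⟨hne, hw⟩ := hw
    by_cases hadj : G.Adj l.1 v
    · rw [lmul_cons_of_adj hadj]
      exact ((ih (hw hadj)).cons l).trans (consLetter_cons_shuffle hadj).symm
    · rw [lmul_cons_of_not_adj hne hadj]
      exact .refl _

theorem lmul_consLetter_shuffle (b : Γ v) (hw : CannotStartAt G v w) :
    Shuffle G (lmul G a (consLetter b w)) (consLetter (a * b) w) := by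
  by_cases hb : b = 1
  · rw [hb, consLetter_one, mul_one]
    exact lmul_shuffle_consLetter hw
  · rw [consLetter_of_ne_one hb, lmul_cons_self]
    exact .refl _

theorem lmul_lmul_shuffle (a b : Γ v) (hw : IsReduced G w) :
    Shuffle G (lmul G a (lmul G b w)) (lmul G (a * b) w) := by
  induction w with
  | nil => exact lmul_consLetter_shuffle b trivial
  | cons l w ih =>
    obtain ⟨u, x⟩ := l
    obtain ⟨-, hfree, hw⟩ := hw
    by_cases hu : u = v
    · subst hu
      rw [lmul_cons_self, lmul_cons_self, mul_assoc]
      exact lmul_consLetter_shuffle _ hfree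
    by_cases hadj : G.Adj u v
    · rw [lmul_cons_of_adj hadj, lmul_cons_of_adj hadj, lmul_cons_of_adj hadj]
      exact (ih hw).cons _
    · rw [lmul_cons_of_not_adj hu hadj, lmul_cons_of_not_adj hu hadj]
      exact lmul_consLetter_shuffle b ⟨hu, fun h => absurd h hadj⟩

theorem lmul_one (hw : IsReduced G w) : lmul G (1 : Γ v) w = w := by
  induction w with
  | nil => exact consLetter_one
  | cons l w ih =>
    obtain ⟨u, x⟩ := l
    obtain ⟨hx, -, hw⟩ := hw
    by_cases hu : u = v
    · subst hu
      rw [lmul_cons_self, one_mul, consLetter_of_ne_one hx]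
    by_cases hadj : G.Adj u v
    · rw [lmul_cons_of_adj hadj, ih hw]
    · rw [lmul_cons_of_not_adj hu hadj, consLetter_one]

theorem lmul_consLetter_of_adj {u : V} (huv : G.Adj u v) (a : Γ u) (b : Γ v) :
    lmul G a (consLetter b w) = consLetter b (lmul G a w) := by
  unfold consLetter
  split_ifs
  exacts [rfl, lmul_cons_of_adj huv.symm w]

theorem lmul_lmul_shuffle_comm {u : V} (huv : G.Adj u v) (a : Γ u) (b : Γ v)
    (w : List (Σ v, Γ v)) :
    Shuffle G (lmul G a (lmul G b w)) (lmul G b (lmul G a w)) := by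
  induction w with
  | nil =>
    rw [lmul_nil, lmul_nil, lmul_consLetter_of_adj huv, lmul_consLetter_of_adj huv.symm]
    exact consLetter_consLetter_shuffle huv.symm b a
  | cons l w ih =>
    obtain ⟨t, x⟩ := l
    by_cases htu : t = u
    · subst htu
      rw [lmul_cons_of_adj (l := ⟨t, x⟩) huv, lmul_cons_self, lmul_cons_self,
        lmul_consLetter_of_adj huv.symm]
      exact .refl _
    by_cases htv : t = v
    · subst htv
      rw [lmul_cons_of_adj (l := ⟨t, x⟩) huv.symm, lmul_cons_self, lmul_cons_self,
        lmul_consLetter_of_adj huv]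
      exact .refl _
    by_cases hu : G.Adj t u <;> by_cases hv : G.Adj t v
    · rw [lmul_cons_of_adj hv, lmul_cons_of_adj hu, lmul_cons_of_adj hu, lmul_cons_of_adj hv]
      exact ih.cons _
    · rw [lmul_cons_of_not_adj htv hv, lmul_consLetter_of_adj huv, lmul_cons_of_adj hu,
        lmul_cons_of_not_adj htv hv]
      exact .refl _
    · rw [lmul_cons_of_adj hv, lmul_cons_of_not_adj htu hu, lmul_cons_of_not_adj htu hu,
        lmul_consLetter_of_adj huv.symm, lmul_cons_of_adj hv]
      exact .refl _
    · rw [lmul_cons_of_not_adj htv hv, lmul_consLetter_of_adj huv, lmul_cons_of_not_adj htu hu,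
        lmul_consLetter_of_adj huv.symm, lmul_cons_of_not_adj htv hv]
      exact consLetter_consLetter_shuffle huv.symm b a

theorem lmul_cons_cons_shuffle {x y : Σ v, Γ v} (hxy : G.Adj x.1 y.1) (s : List (Σ v, Γ v)) :
    Shuffle G (lmul G a (x :: y :: s)) (lmul G a (y :: x :: s)) := by
  obtain ⟨t, x⟩ := x
  obtain ⟨r, y⟩ := y
  by_cases ht : t = v
  · subst ht
    rw [lmul_cons_self, lmul_cons_of_adj hxy.symm, lmul_cons_self]
    exact consLetter_cons_shuffle hxy.symm
  by_cases hr : r = v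
  · subst hr
    rw [lmul_cons_of_adj hxy, lmul_cons_self, lmul_cons_self]
    exact (consLetter_cons_shuffle hxy).symm
  by_cases htv : G.Adj t v <;> by_cases hrv : G.Adj r v
  · rw [lmul_cons_of_adj htv, lmul_cons_of_adj hrv, lmul_cons_of_adj hrv, lmul_cons_of_adj htv]
    exact .swap_cons hxy _
  · rw [lmul_cons_of_adj htv, lmul_cons_of_not_adj hr hrv, lmul_cons_of_not_adj hr hrv]
    exact (consLetter_cons_shuffle htv).symm.trans ((Shuffle.swap_cons hxy s).consLetter a)
  · rw [lmul_cons_of_not_adj ht htv, lmul_cons_of_adj hrv, lmul_cons_of_not_adj ht htv]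
    exact ((Shuffle.swap_cons hxy s).consLetter a).trans (consLetter_cons_shuffle hrv)
  · rw [lmul_cons_of_not_adj ht htv, lmul_cons_of_not_adj hr hrv]
    exact (Shuffle.swap_cons hxy s).consLetter a

theorem Shuffle.lmul (a : Γ v) {w w' : List (Σ v, Γ v)} (h : Shuffle G w w') :
    Shuffle G (lmul G a w) (lmul G a w') := by
  induction h with
  | swap p s x y hxy =>
    induction p with
    | nil => exact lmul_cons_cons_shuffle hxy s
    | cons l p ih =>
      obtain ⟨t, z⟩ := l
      by_cases ht : t = v
      · subst ht
        simp only [List.cons_append, lmul_cons_self]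
        exact (Shuffle.swap p s x y hxy).consLetter _
      by_cases htv : G.Adj t v
      · simp only [List.cons_append, lmul_cons_of_adj (l := ⟨t, z⟩) htv]
        exact ih.cons _
      · simp only [List.cons_append, lmul_cons_of_not_adj (l := ⟨t, z⟩) ht htv]
        exact ((Shuffle.swap p s x y hxy).cons _).consLetter a
  | refl w => exact .refl _
  | symm _ ih => exact ih.symm
  | trans _ _ ih₁ ih₂ => exact ih₁.trans ih₂

theorem cannotStartAt_lmul {t : V} (htv : G.Adj t v) (h : CannotStartAt G t w) :
    CannotStartAt G t (lmul G a w) := by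
  induction w with
  | nil => exact cannotStartAt_consLetter htv trivial
  | cons l w ih =>
    obtain ⟨u, x⟩ := l
    obtain ⟨hut, hw⟩ := h
    by_cases hu : u = v
    · subst hu
      rw [lmul_cons_self]
      exact cannotStartAt_consLetter htv (hw htv.symm)
    by_cases hadj : G.Adj u v
    · rw [lmul_cons_of_adj hadj]
      exact ⟨hut, fun h' => ih (hw h')⟩
    · rw [lmul_cons_of_not_adj hu hadj]
      exact cannotStartAt_consLetter htv ⟨hut, hw⟩

theorem isReduced_lmul (hw : IsReduced G w) : IsReduced G (lmul G a w) := by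
  induction w with
  | nil => exact isReduced_consLetter trivial trivial
  | cons l w ih =>
    obtain ⟨u, x⟩ := l
    obtain ⟨hx, hfree, hw⟩ := hw
    by_cases hu : u = v
    · subst hu
      rw [lmul_cons_self]
      exact isReduced_consLetter hw hfree
    by_cases hadj : G.Adj u v
    · rw [lmul_cons_of_adj hadj]
      exact ⟨hx, cannotStartAt_lmul hadj hfree, ih hw⟩
    · rw [lmul_cons_of_not_adj hu hadj]
      exact isReduced_consLetter ⟨hx, hfree, hw⟩ ⟨hu, fun h => absurd h hadj⟩

theorem length_lmul_le : (lmul G a w).length ≤ w.length + 1 := by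
  induction w with
  | nil => exact length_consLetter_le
  | cons l w ih =>
    obtain ⟨u, x⟩ := l
    by_cases hu : u = v
    · subst hu
      rw [lmul_cons_self]
      exact length_consLetter_le.trans (by simp)
    by_cases hadj : G.Adj u v
    · rw [lmul_cons_of_adj hadj]
      simpa using ih
    · rw [lmul_cons_of_not_adj hu hadj]
      exact length_consLetter_le

theorem forall_mem_lmul {U : Set V} (hv : v ∈ U) (hw : ∀ l ∈ w, l.1 ∈ U) :
    ∀ l ∈ lmul G a w, l.1 ∈ U := by
  have hcons : ∀ {c : Γ v} {w'}, (∀ l ∈ w', l.1 ∈ U) → ∀ l ∈ consLetter c w', l.1 ∈ U :=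
    fun hw' l hl => (mem_consLetter hl).elim (fun h => h ▸ hv) (hw' l)
  induction w with
  | nil => exact hcons hw
  | cons l w ih =>
    obtain ⟨u, x⟩ := l
    simp only [List.mem_cons, forall_eq_or_imp] at hw
    by_cases hu : u = v
    · subst hu
      rw [lmul_cons_self]
      exact hcons hw.2
    by_cases hadj : G.Adj u v
    · rw [lmul_cons_of_adj hadj]
      simpa [hw.1] using ih hw.2
    · rw [lmul_cons_of_not_adj hu hadj]
      exact hcons (by simpa using hw)

end LMul

theorem isReduced_reduce (w : List (Σ v, Γ v)) : IsReduced G (reduce G w) := by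
  induction w with
  | nil => trivial
  | cons l w ih => exact isReduced_lmul ih

theorem length_reduce_le (w : List (Σ v, Γ v)) : (reduce G w).length ≤ w.length := by
  induction w with
  | nil => exact le_rfl
  | cons l w ih => exact length_lmul_le.trans (by simpa using ih)

theorem forall_mem_reduce {U : Set V} {w : List (Σ v, Γ v)} (hw : ∀ l ∈ w, l.1 ∈ U) :
    ∀ l ∈ reduce G w, l.1 ∈ U := by
  induction w with
  | nil => simp [reduce]
  | cons l w ih =>
    simp only [List.mem_cons, forall_eq_or_imp] at hw
    exact forall_mem_lmul hw.1 (ih hw.2)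

theorem IsReduced.reduce_shuffle {w : List (Σ v, Γ v)} (hw : IsReduced G w) :
    Shuffle G (reduce G w) w := by
  induction w with
  | nil => exact .refl _
  | cons x w ih =>
    obtain ⟨hx, hfree, hw⟩ := hw
    have h := ((ih hw).lmul x.2).trans (lmul_shuffle_consLetter hfree)
    rwa [consLetter_of_ne_one hx] at h

def wordProd (G : SimpleGraph V) (w : List (Σ v, Γ v)) : GraphProduct G Γ :=
  (w.map fun l => of l.1 l.2).prod

@[simp] theorem wordProd_nil : wordProd G ([] : List (Σ v, Γ v)) = 1 := rfl

@[simp] theorem wordProd_cons (l : Σ v, Γ v) (w : List (Σ v, Γ v)) :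
    wordProd G (l :: w) = of l.1 l.2 * wordProd G w := List.prod_cons

@[simp] theorem wordProd_append (w u : List (Σ v, Γ v)) :
    wordProd G (w ++ u) = wordProd G w * wordProd G u := by
  simp [wordProd]

theorem of_commute {u v : V} (h : G.Adj u v) (a : Γ u) (b : Γ v) :
    Commute (of (G := G) u a) (of v b) := by
  have hrel : CoprodI.of a * CoprodI.of b * (CoprodI.of a)⁻¹ * (CoprodI.of b)⁻¹ ∈
      Subgroup.normalClosure (graphProdRels G Γ) :=
    Subgroup.subset_normalClosure ⟨u, v, a, b, h, rfl⟩
  have := (QuotientGroup.eq_one_iff _).2 hrel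
  simp only [QuotientGroup.mk_mul, QuotientGroup.mk_inv] at this
  exact mul_inv_eq_one.1 (mul_inv_eq_one.1 this) |> mul_inv_eq_iff_eq_mul.1

theorem commute_of_wordProd {t : V} (x : Γ t) {w : List (Σ v, Γ v)}
    (h : ∀ l ∈ w, G.Adj l.1 t) : Commute (of (G := G) t x) (wordProd G w) :=
  Commute.list_prod_right _ _ fun _ hy => by
    obtain ⟨l, hl, rfl⟩ := List.mem_map.1 hy
    exact (of_commute (h l hl) l.2 x).symm

theorem wordProd_consLetter {v : V} (c : Γ v) (w : List (Σ v, Γ v)) :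
    wordProd G (consLetter c w) = of v c * wordProd G w := by
  unfold consLetter; split_ifs with hc <;> simp [hc]

theorem wordProd_lmul {v : V} (a : Γ v) (w : List (Σ v, Γ v)) :
    wordProd G (lmul G a w) = of v a * wordProd G w := by
  induction w with
  | nil => exact wordProd_consLetter a []
  | cons l w ih =>
    obtain ⟨u, x⟩ := l
    by_cases hu : u = v
    · subst hu
      rw [lmul_cons_self, wordProd_consLetter, wordProd_cons, map_mul, mul_assoc]
    by_cases hadj : G.Adj u v
    · rw [lmul_cons_of_adj hadj, wordProd_cons, wordProd_cons, ih, ← mul_assoc, ← mul_assoc]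
      exact congrArg (· * wordProd G w) (of_commute hadj x a).eq
    · rw [lmul_cons_of_not_adj hu hadj, wordProd_consLetter]

theorem wordProd_reduce (w : List (Σ v, Γ v)) : wordProd G (reduce G w) = wordProd G w := by
  induction w with
  | nil => rfl
  | cons l w ih => rw [reduce, wordProd_lmul, ih, wordProd_cons]

theorem exists_wordProd_eq (g : GraphProduct G Γ) : ∃ w : List (Σ v, Γ v), wordProd G w = g := by
  obtain ⟨x, rfl⟩ := QuotientGroup.mk_surjective g
  induction x using CoprodI.induction_on with
  | one => exact ⟨[], rfl⟩
  | of v a => exact ⟨[⟨v, a⟩], mul_one _⟩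
  | mul x y hx hy =>
    obtain ⟨w, hw⟩ := hx
    obtain ⟨u, hu⟩ := hy
    exact ⟨w ++ u, by rw [wordProd_append, hw, hu]; rfl⟩

instance shuffleSetoid (G : SimpleGraph V) (Γ : V → Type*) [∀ v, Group (Γ v)] :
    Setoid {w : List (Σ v, Γ v) // IsReduced G w} where
  r w w' := Shuffle G w.1 w'.1
  iseqv := ⟨fun _ => .refl _, .symm, .trans⟩

abbrev NormalForm (G : SimpleGraph V) (Γ : V → Type*) [∀ v, Group (Γ v)] : Type _ :=
  Quotient (shuffleSetoid G Γ)

noncomputable def lmulNF {v : V} (a : Γ v) : NormalForm G Γ → NormalForm G Γ :=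
  Quotient.map (fun w => ⟨lmul G a w.1, isReduced_lmul w.2⟩) fun _ _ h => h.lmul a

theorem lmulNF_lmulNF {v : V} (a b : Γ v) (x : NormalForm G Γ) :
    lmulNF a (lmulNF b x) = lmulNF (a * b) x :=
  Quotient.inductionOn x fun w => Quotient.sound (lmul_lmul_shuffle a b w.2)

theorem lmulNF_one {v : V} (x : NormalForm G Γ) : lmulNF (1 : Γ v) x = x :=
  Quotient.inductionOn x fun w => congrArg _ (Subtype.ext (lmul_one w.2))

noncomputable def lmulPerm (G : SimpleGraph V) (v : V) : Γ v →* Equiv.Perm (NormalForm G Γ) where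
  toFun a :=
    { toFun := lmulNF a
      invFun := lmulNF a⁻¹
      left_inv x := by rw [lmulNF_lmulNF, inv_mul_cancel, lmulNF_one]
      right_inv x := by rw [lmulNF_lmulNF, mul_inv_cancel, lmulNF_one] }
  map_one' := Equiv.ext lmulNF_one
  map_mul' a b := Equiv.ext fun x => (lmulNF_lmulNF a b x).symm

theorem lmulPerm_commute {u v : V} (h : G.Adj u v) (a : Γ u) (b : Γ v) :
    Commute (lmulPerm G u a) (lmulPerm G v b) :=
  Equiv.ext fun x => Quotient.inductionOn x fun w =>
    Quotient.sound (lmul_lmul_shuffle_comm h a b w.1)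

noncomputable def toPerm (G : SimpleGraph V) : GraphProduct G Γ →* Equiv.Perm (NormalForm G Γ) :=
  QuotientGroup.lift _ (CoprodI.lift (lmulPerm G)) <| Subgroup.normalClosure_le_normal <| by
    rintro _ ⟨u, v, a, b, h, rfl⟩
    simp only [SetLike.mem_coe, MonoidHom.mem_ker, map_mul, map_inv, CoprodI.lift_of]
    rw [(lmulPerm_commute h a b).mul_inv_cancel, mul_inv_cancel]

theorem toPerm_wordProd (w : List (Σ v, Γ v)) :
    toPerm G (wordProd G w) (Quotient.mk (shuffleSetoid G Γ) ⟨[], trivial⟩) =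
      Quotient.mk (shuffleSetoid G Γ) ⟨reduce G w, isReduced_reduce w⟩ := by
  induction w with
  | nil => rfl
  | cons l w ih =>
    rw [wordProd_cons, map_mul, Equiv.Perm.mul_apply, ih]
    rfl

theorem shuffle_reduce_of_wordProd_eq {w w' : List (Σ v, Γ v)}
    (h : wordProd G w = wordProd G w') : Shuffle G (reduce G w) (reduce G w') :=
  Quotient.exact (s := shuffleSetoid G Γ)
    (a := ⟨_, isReduced_reduce w⟩) (b := ⟨_, isReduced_reduce w'⟩)
    (by rw [← toPerm_wordProd, h, toPerm_wordProd])

theorem IsReduced.shuffle_of_wordProd_eq {w w' : List (Σ v, Γ v)} (hw : IsReduced G w)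
    (hw' : IsReduced G w') (h : wordProd G w = wordProd G w') : Shuffle G w w' :=
  hw.reduce_shuffle.symm.trans ((shuffle_reduce_of_wordProd_eq h).trans hw'.reduce_shuffle)

section Full

variable {U : Set V}

theorem of_mem_full {v : V} (hv : v ∈ U) (a : Γ v) : of v a ∈ full G Γ U :=
  Subgroup.subset_closure (Set.mem_biUnion hv ⟨a, rfl⟩)

theorem range_of_le_full {v : V} (hv : v ∈ U) : (of (G := G) (Γ := Γ) v).range ≤ full G Γ U := by
  rintro _ ⟨a, rfl⟩
  exact of_mem_full hv a

theorem full_mono {U' : Set V} (h : U ⊆ U') : full G Γ U ≤ full G Γ U' :=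
  Subgroup.closure_mono (Set.biUnion_subset_biUnion_left h)

theorem wordProd_mem_full {w : List (Σ v, Γ v)} (h : ∀ l ∈ w, l.1 ∈ U) :
    wordProd G w ∈ full G Γ U :=
  Subgroup.list_prod_mem _ <| List.forall_mem_map.2 fun l hl => of_mem_full (h l hl) l.2

theorem wordProd_reverse_inv (w : List (Σ v, Γ v)) :
    wordProd G (w.map fun l => ⟨l.1, l.2⁻¹⟩).reverse = (wordProd G w)⁻¹ := by
  induction w with
  | nil => simp
  | cons l w ih => simp [ih]

theorem exists_wordProd_eq_of_mem_full {g : GraphProduct G Γ} (hg : g ∈ full G Γ U) :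
    ∃ w : List (Σ v, Γ v), (∀ l ∈ w, l.1 ∈ U) ∧ wordProd G w = g := by
  induction hg using Subgroup.closure_induction with
  | mem x hx =>
    obtain ⟨v, hv, a, rfl⟩ : ∃ v ∈ U, ∃ a, of v a = x := by simpa using hx
    exact ⟨[⟨v, a⟩], by simpa using hv, mul_one _⟩
  | one => exact ⟨[], by simp, rfl⟩
  | mul x y _ _ hx hy =>
    obtain ⟨w, hwU, rfl⟩ := hx
    obtain ⟨u, huU, rfl⟩ := hy
    exact ⟨w ++ u, by simpa using fun l hl => hl.elim (hwU l) (huU l), wordProd_append w u⟩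
  | inv x _ hx =>
    obtain ⟨w, hwU, rfl⟩ := hx
    refine ⟨_, fun l hl => ?_, wordProd_reverse_inv w⟩
    obtain ⟨l', hl', rfl⟩ := List.mem_map.1 (List.mem_reverse.1 hl)
    exact hwU l' hl'

end Full

theorem exists_shorter_of_not_cannotStartAt {t : V} {w : List (Σ v, Γ v)}
    (h : ¬ CannotStartAt G t w) : ∃ (x : Γ t) (w' : List (Σ v, Γ v)),
      w'.length < w.length ∧ wordProd G w = of t x * wordProd G w' := by
  obtain ⟨α, x, β, rfl, hα⟩ := exists_eq_append_of_not_cannotStartAt h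
  refine ⟨x, α ++ β, by simp, ?_⟩
  simp only [wordProd_append, wordProd_cons, ← mul_assoc, (commute_of_wordProd x hα).eq]

theorem exists_shorter_of_not_cannotStartAt_reverse {t : V} {w : List (Σ v, Γ v)}
    (h : ¬ CannotStartAt G t w.reverse) : ∃ (x : Γ t) (w' : List (Σ v, Γ v)),
      w'.length < w.length ∧ wordProd G w = wordProd G w' * of t x := by
  obtain ⟨α, x, β, hw, hα⟩ := exists_eq_append_of_not_cannotStartAt h
  rw [List.reverse_eq_iff] at hw
  subst hw
  refine ⟨x, β.reverse ++ α.reverse, by simp, ?_⟩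
  have hα' : ∀ l ∈ α.reverse, G.Adj l.1 t := fun l hl => hα l (List.mem_reverse.1 hl)
  simp [mul_assoc, (commute_of_wordProd x hα').eq]

theorem isReduced_append {S : Set V} {w u : List (Σ v, Γ v)} (hw : IsReduced G w)
    (hu : IsReduced G u) (huS : ∀ l ∈ u, l.1 ∈ S)
    (hwS : ∀ t ∈ S, CannotStartAt G t w.reverse) : IsReduced G (w ++ u) := by
  induction w with
  | nil => exact hu
  | cons x w ih =>
    obtain ⟨hx, hfree, hw⟩ := hw
    have hwS' : ∀ t ∈ S, CannotStartAt G t w.reverse ∧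
        ((∀ l ∈ w.reverse, G.Adj l.1 t) → CannotStartAt G t [x]) := fun t ht => by
      simpa [cannotStartAt_append] using hwS t ht
    refine ⟨hx, cannotStartAt_append.2 ⟨hfree, fun hadj => ?_⟩, ih hw fun t ht => (hwS' t ht).1⟩
    refine cannotStartAt_of_forall_ne fun l hl hlx => ?_
    exact ((hwS' x.1 (hlx ▸ huS l hl)).2 (by simpa using hadj)).1 rfl

theorem exists_isReduced_forall_cannotStartAt {S : Set V} {D : Set (GraphProduct G Γ)}
    (hD : D.Nonempty) (hmul : ∀ d ∈ D, ∀ t ∈ S, ∀ x : Γ t, of t x * d ∈ D ∧ d * of t x ∈ D) :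
    ∃ w : List (Σ v, Γ v), IsReduced G w ∧ wordProd G w ∈ D ∧
      ∀ t ∈ S, CannotStartAt G t w ∧ CannotStartAt G t w.reverse := by
  classical
  have hex : ∃ n, ∃ w : List (Σ v, Γ v), w.length = n ∧ wordProd G w ∈ D := by
    obtain ⟨d, hd⟩ := hD
    obtain ⟨w, rfl⟩ := exists_wordProd_eq (G := G) d
    exact ⟨_, w, rfl, hd⟩
  obtain ⟨w₀, hlen, hw₀⟩ := Nat.find_spec hex
  have hmin : ∀ w : List (Σ v, Γ v), wordProd G w ∈ D → (reduce G w₀).length ≤ w.length :=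
    fun w hw => (length_reduce_le w₀).trans (hlen ▸ Nat.find_min' hex ⟨w, rfl, hw⟩)
  have hD' : wordProd G (reduce G w₀) ∈ D := by rwa [wordProd_reduce]
  refine ⟨_, isReduced_reduce w₀, hD', fun t ht => ⟨?_, ?_⟩⟩
  · by_contra h
    obtain ⟨x, w', hlt, hw'⟩ := exists_shorter_of_not_cannotStartAt h
    have hw'D : wordProd G w' ∈ D := by simpa [hw'] using (hmul _ hD' t ht x⁻¹).1
    exact (hmin w' hw'D).not_gt hlt
  · by_contra h
    obtain ⟨x, w', hlt, hw'⟩ := exists_shorter_of_not_cannotStartAt_reverse h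
    have hw'D : wordProd G w' ∈ D := by simpa [hw'] using (hmul _ hD' t ht x⁻¹).2
    exact (hmin w' hw'D).not_gt hlt

theorem forall_adj_of_conj_mem_full {S : Set V} {s : V} {z : Γ s} (hz : z ≠ 1)
    {w : List (Σ v, Γ v)} (hw : IsReduced G w) (hstart : CannotStartAt G s w)
    (hend : ∀ t ∈ S, CannotStartAt G t w.reverse)
    (hconj : (wordProd G w)⁻¹ * of s z * wordProd G w ∈ full G Γ S) :
    ∀ l ∈ w, G.Adj s l.1 := by
  obtain ⟨u, huS, hu⟩ := exists_wordProd_eq_of_mem_full hconj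
  have hsh : Shuffle G (⟨s, z⟩ :: w) (w ++ reduce G u) := by
    refine IsReduced.shuffle_of_wordProd_eq ⟨hz, hstart, hw⟩
      (isReduced_append hw (isReduced_reduce u) (forall_mem_reduce huS) hend) ?_
    rw [wordProd_append, wordProd_reduce, hu, wordProd_cons]
    group
  have hsingle : reduce G u = [⟨s, z⟩] := by
    have hperm : ([(⟨s, z⟩ : Σ v, Γ v)] ++ w).Perm (reduce G u ++ w) :=
      hsh.perm.trans List.perm_append_comm
    exact List.perm_singleton.1 ((List.perm_append_right_iff w).1 hperm).symm
  rw [hsingle] at hsh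
  exact forall_adj_of_shuffle_cons_append hsh hstart

theorem mem_full_union_lkSet_of_finiteIndex {S : Set V} (hS : ∀ s ∈ S, Infinite (Γ s))
    {g : GraphProduct G Γ}
    (hfin : ((conjSub g (full G Γ S)).subgroupOf (full G Γ S)).FiniteIndex) :
    g ∈ full G Γ (S ∪ lkSet G S) := by
  set F := full G Γ S
  obtain ⟨w, hw, hwD, hfree⟩ := exists_isReduced_forall_cannotStartAt (S := S)
    ⟨g, DoubleCoset.mem_doubleCoset_self F F g⟩ fun d hd t ht x => by
      obtain ⟨a, ha, b, hb, rfl⟩ := DoubleCoset.mem_doubleCoset.1 hd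
      exact ⟨DoubleCoset.mem_doubleCoset.2 ⟨_, F.mul_mem (of_mem_full ht x) ha, b, hb, by group⟩,
        DoubleCoset.mem_doubleCoset.2 ⟨a, ha, _, F.mul_mem hb (of_mem_full ht x), by group⟩⟩
  have hlk : wordProd G w ∈ full G Γ (lkSet G S) := wordProd_mem_full fun l hl =>
    Set.mem_iInter₂.2 fun s hs => by
      have := hS s hs
      obtain ⟨z, hz, hconj⟩ :=
        exists_ne_one_conj_mem_of_finiteIndex hfin hwD (of s) (range_of_le_full hs)
      exact forall_adj_of_conj_mem_full hz hw (hfree s hs).1 (fun t ht => (hfree t ht).2) hconj l hl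
  obtain ⟨a, ha, b, hb, hab⟩ := DoubleCoset.mem_doubleCoset.1 hwD
  rw [show g = a⁻¹ * wordProd G w * b⁻¹ by rw [hab]; group]
  have hF : F ≤ full G Γ (S ∪ lkSet G S) := full_mono Set.subset_union_left
  exact mul_mem (mul_mem (inv_mem (hF ha)) (full_mono Set.subset_union_right hlk))
    (inv_mem (hF hb))

end GraphProduct

theorem stmt_4_general {V : Type*} (G : SimpleGraph V) (Γ : V → Type*)
    [∀ v, Group (Γ v)] [∀ v, Infinite (Γ v)] (S : Set V) (g : GraphProduct G Γ)
    (hfin : ((conjSub g (GraphProduct.full G Γ S)).subgroupOf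
      (GraphProduct.full G Γ S)).FiniteIndex) :
    g ∈ GraphProduct.full G Γ (S ∪ lkSet G S) ∧
      ∀ g' : GraphProduct G Γ,
        ((conjSub g' (GraphProduct.full G Γ S)).subgroupOf
            (GraphProduct.full G Γ S)).FiniteIndex →
        ((conjSub g'⁻¹ (GraphProduct.full G Γ S)).subgroupOf
            (GraphProduct.full G Γ S)).FiniteIndex →
        g' ∈ GraphProduct.full G Γ (S ∪ lkSet G S) :=
  have hS : ∀ s ∈ S, Infinite (Γ s) := fun _ _ => inferInstance
  ⟨GraphProduct.mem_full_union_lkSet_of_finiteIndex hS hfin,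
    fun _ h _ => GraphProduct.mem_full_union_lkSet_of_finiteIndex hS h⟩

/-- If `Γ_𝒮 ∩ g Γ_𝒮 g⁻¹` has finite index in `Γ_𝒮` then `g ∈ Γ_{𝒮 ∪ lk(𝒮)}`;
consequently the quasi-normalizer of `Γ_𝒮` is contained in `Γ_{𝒮 ∪ lk(𝒮)}`. -/
theorem stmt_4 {V : Type*} [Fintype V] (G : SimpleGraph V) (Γ : V → Type*)
    [∀ v, Group (Γ v)] [∀ v, Infinite (Γ v)] (S : Set V) (g : GraphProduct G Γ)
    (hfin : ((conjSub g (GraphProduct.full G Γ S)).subgroupOf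
      (GraphProduct.full G Γ S)).FiniteIndex) :
    g ∈ GraphProduct.full G Γ (S ∪ lkSet G S) ∧
      ∀ g' : GraphProduct G Γ,
        ((conjSub g' (GraphProduct.full G Γ S)).subgroupOf
            (GraphProduct.full G Γ S)).FiniteIndex →
        ((conjSub g'⁻¹ (GraphProduct.full G Γ S)).subgroupOf
            (GraphProduct.full G Γ S)).FiniteIndex →
        g' ∈ GraphProduct.full G Γ (S ∪ lkSet G S) :=
  stmt_4_general G Γ S g hfin
end

section
/- Let Γ = 𝒢{Γ_v} be a graph product of groups over a finite simple graph and let 𝒞₁, 𝒞₂ be two disjoint cliques of 𝒢 (𝒞₁ ∩ 𝒞₂ = ∅). Then for any g ∈ Γ, the intersection Γ_{𝒞₁} ∩ g Γ_{𝒞₂} g⁻¹ is trivial. -/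
open Monoid

variable {V : Type*}

/-!
The retraction `Γ → Γ_{𝒞₁}` killing every vertex group outside `𝒞₁` is the identity on
`Γ_{𝒞₁}` and kills `Γ_{𝒞₂}`, hence also every conjugate of `Γ_{𝒞₂}`, since its kernel is normal.
So an element of `Γ_{𝒞₁} ∩ g Γ_{𝒞₂} g⁻¹` equals its own image under the retraction, which is `1`.
-/

namespace GraphProduct

variable {G : SimpleGraph V} {Γ : V → Type*} [∀ v, Group (Γ v)]

theorem commute_of_of_adj {u w : V} (h : G.Adj u w) (a : Γ u) (b : Γ w) :
    Commute (of (G := G) u a) (of w b) := by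
  rw [← commutatorElement_eq_one_iff_commute, commutatorElement_def]
  exact (QuotientGroup.eq_one_iff (N := Subgroup.normalClosure (graphProdRels G Γ))
    (CoprodI.of a * CoprodI.of b * (CoprodI.of a)⁻¹ * (CoprodI.of b)⁻¹)).mpr
    (Subgroup.subset_normalClosure ⟨u, w, a, b, h, rfl⟩)

noncomputable def lift {H : Type*} [Group H] (f : ∀ v, Γ v →* H)
    (hf : ∀ ⦃u w⦄, G.Adj u w → ∀ (a : Γ u) (b : Γ w), Commute (f u a) (f w b)) :
    GraphProduct G Γ →* H :=
  QuotientGroup.lift _ (CoprodI.lift f) <| Subgroup.normalClosure_le_normal <| by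
    rintro _ ⟨u, w, a, b, h, rfl⟩
    simpa [← commutatorElement_def, commutatorElement_eq_one_iff_commute] using hf h a b

@[simp]
theorem lift_of {H : Type*} [Group H] (f : ∀ v, Γ v →* H)
    (hf : ∀ ⦃u w⦄, G.Adj u w → ∀ (a : Γ u) (b : Γ w), Commute (f u a) (f w b)) (v : V)
    (a : Γ v) : lift f hf (of v a) = f v a :=
  CoprodI.lift_of f a

open Classical in
noncomputable def retraction (S : Set V) : GraphProduct G Γ →* GraphProduct G Γ :=
  lift (fun v => if v ∈ S then of v else 1) fun u w h a b => by
    by_cases hu : u ∈ S <;> by_cases hw : w ∈ S <;>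
      simp [hu, hw, commute_of_of_adj h a b]

theorem retraction_of_mem {S : Set V} {v : V} (hv : v ∈ S) (a : Γ v) :
    retraction (G := G) S (of v a) = of v a := by
  rw [retraction, lift_of, if_pos hv]

theorem retraction_of_notMem {S : Set V} {v : V} (hv : v ∉ S) (a : Γ v) :
    retraction (G := G) S (of v a) = 1 := by
  rw [retraction, lift_of, if_neg hv, MonoidHom.one_apply]

theorem full_le_iff {U : Set V} {K : Subgroup (GraphProduct G Γ)} :
    full G Γ U ≤ K ↔ ∀ u ∈ U, ∀ a : Γ u, of u a ∈ K := by
  simp [full, Subgroup.closure_le, Set.iUnion_subset_iff, Set.range_subset_iff]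

theorem retraction_eq_self {S : Set V} {x : GraphProduct G Γ} (hx : x ∈ full G Γ S) :
    retraction S x = x := by
  have hS : full G Γ S ≤ (retraction S).eqLocus (MonoidHom.id _) :=
    full_le_iff.mpr fun u hu a => retraction_of_mem hu a
  exact hS hx

theorem full_le_ker_retraction {S T : Set V} (hST : Disjoint S T) :
    full G Γ T ≤ (retraction S).ker :=
  full_le_iff.mpr fun _ hu a => retraction_of_notMem (hST.notMem_of_mem_right hu) a

end GraphProduct

theorem conjSub_le_of_normal {G : Type*} [Group G] {H K : Subgroup G} [hK : K.Normal]
    (hHK : H ≤ K) (g : G) : conjSub g H ≤ K := by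
  rintro _ ⟨y, hy, rfl⟩
  exact hK.conj_mem y (hHK hy) g

theorem stmt_15_general {V : Type*} (G : SimpleGraph V) (Γ : V → Type*)
    [∀ v, Group (Γ v)] (C₁ C₂ : Set V)
    (hdisj : C₁ ∩ C₂ = ∅) (g : GraphProduct G Γ) :
    GraphProduct.full G Γ C₁ ⊓ conjSub g (GraphProduct.full G Γ C₂) = ⊥ := by
  rw [eq_bot_iff]
  rintro x ⟨hx₁, hx₂⟩
  have hkill : conjSub g (GraphProduct.full G Γ C₂) ≤ (GraphProduct.retraction C₁).ker :=
    conjSub_le_of_normal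
      (GraphProduct.full_le_ker_retraction (Set.disjoint_iff_inter_eq_empty.mpr hdisj)) g
  rw [Subgroup.mem_bot, ← GraphProduct.retraction_eq_self hx₁]
  exact hkill hx₂

/-- For disjoint cliques `𝒞₁, 𝒞₂` of `𝒢` and any `g ∈ Γ`, the intersection
`Γ_{𝒞₁} ∩ g Γ_{𝒞₂} g⁻¹` is trivial. -/
theorem stmt_15 {V : Type*} [Fintype V] (G : SimpleGraph V) (Γ : V → Type*)
    [∀ v, Group (Γ v)] (C₁ C₂ : Set V)
    (hC₁ : G.IsClique C₁) (hmax₁ : ∀ s : Set V, G.IsClique s → C₁ ⊆ s → s = C₁)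
    (hC₂ : G.IsClique C₂) (hmax₂ : ∀ s : Set V, G.IsClique s → C₂ ⊆ s → s = C₂)
    (hdisj : C₁ ∩ C₂ = ∅) (g : GraphProduct G Γ) :
    GraphProduct.full G Γ C₁ ⊓ conjSub g (GraphProduct.full G Γ C₂) = ⊥ :=
  stmt_15_general G Γ C₁ C₂ hdisj g
end
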